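/- arXiv:2307.15525 — 4 statements merged into one kernel-verified Lean document; each statement's English description precedes it below -/
import Mathlib

section
/- Let f : [0,∞) → [0,∞) be non-decreasing and let ξ, η be elements of a real normed space (e.g. matrices in ℝ^{n×m}). Then (1/3)·f((‖ξ‖+‖η‖)/12) ≤ ∫₀¹ f(‖ξ + t·η‖) dt ≤ f(‖ξ‖+‖η‖). -/
open MeasureTheory intervalIntegral

lemma stmt_0_aux {E : Type*} [NormedAddCommGroup E] [NormedSpace ℝ E]
    (f : ℝ → ℝ) (hf_mono : MonotoneOn f (Set.Ici 0))
    (hf_nonneg : ∀ t, 0 ≤ t → 0 ≤ f t)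
    (ξ η : E)
    (hint : IntervalIntegrable (fun t => f ‖ξ + t • η‖) volume 0 1)
    (a b c : ℝ) (ha : 0 ≤ a) (hab : a ≤ b) (hb : b ≤ 1) (hc : 0 ≤ c)
    (hcle : ∀ t ∈ Set.Icc a b, c ≤ ‖ξ + t • η‖) :
    (b - a) * f c ≤ ∫ t in (0:ℝ)..1, f ‖ξ + t • η‖ := by
  have hsub1 : Set.uIcc (0:ℝ) a ⊆ Set.uIcc 0 1 := by
    rw [Set.uIcc_of_le ha, Set.uIcc_of_le (by norm_num : (0:ℝ) ≤ 1)]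
    exact Set.Icc_subset_Icc le_rfl (by linarith)
  have hsub2 : Set.uIcc a b ⊆ Set.uIcc (0:ℝ) 1 := by
    rw [Set.uIcc_of_le hab, Set.uIcc_of_le (by norm_num : (0:ℝ) ≤ 1)]
    exact Set.Icc_subset_Icc ha hb
  have hsub3 : Set.uIcc b (1:ℝ) ⊆ Set.uIcc (0:ℝ) 1 := by
    rw [Set.uIcc_of_le hb, Set.uIcc_of_le (by norm_num : (0:ℝ) ≤ 1)]
    exact Set.Icc_subset_Icc (by linarith) le_rfl
  have h1 := hint.mono_set hsub1
  have h2 := hint.mono_set hsub2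
  have h3 := hint.mono_set hsub3
  have hsplit : (∫ t in (0:ℝ)..1, f ‖ξ + t • η‖)
      = (∫ t in (0:ℝ)..a, f ‖ξ + t • η‖) + (∫ t in a..b, f ‖ξ + t • η‖)
        + (∫ t in b..(1:ℝ), f ‖ξ + t • η‖) := by
    rw [integral_add_adjacent_intervals h1 h2,
      integral_add_adjacent_intervals (h1.trans h2) h3]
  have hn1 : 0 ≤ ∫ t in (0:ℝ)..a, f ‖ξ + t • η‖ :=
    integral_nonneg ha (fun u _ => hf_nonneg _ (norm_nonneg _))
  have hn3 : 0 ≤ ∫ t in b..(1:ℝ), f ‖ξ + t • η‖ :=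
    integral_nonneg hb (fun u _ => hf_nonneg _ (norm_nonneg _))
  have hmid : (b - a) * f c ≤ ∫ t in a..b, f ‖ξ + t • η‖ := by
    have : (∫ t in a..b, f c) ≤ ∫ t in a..b, f ‖ξ + t • η‖ := by
      apply integral_mono_on hab (intervalIntegrable_const) h2
      intro t ht
      exact hf_mono hc (norm_nonneg _) (hcle t ht)
    simpa [intervalIntegral.integral_const, smul_eq_mul] using this
  linarith [hsplit, hn1, hn3, hmid]

/-- Lemma A.1: for non-decreasing `f : [0,∞) → [0,∞)` and vectors `ξ, η` in a real
normed space, `(1/3) f((‖ξ‖+‖η‖)/12) ≤ ∫₀¹ f(‖ξ + t η‖) dt ≤ f(‖ξ‖+‖η‖)`. -/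
theorem stmt_0 {E : Type*} [NormedAddCommGroup E] [NormedSpace ℝ E]
    (f : ℝ → ℝ) (hf_mono : MonotoneOn f (Set.Ici 0))
    (hf_nonneg : ∀ t, 0 ≤ t → 0 ≤ f t)
    (ξ η : E)
    (hint : IntervalIntegrable (fun t => f ‖ξ + t • η‖) volume 0 1) :
    (1/3) * f ((‖ξ‖ + ‖η‖) / 12) ≤ (∫ t in (0:ℝ)..1, f ‖ξ + t • η‖) ∧
      (∫ t in (0:ℝ)..1, f ‖ξ + t • η‖) ≤ f (‖ξ‖ + ‖η‖) := by
  have hc : (0:ℝ) ≤ (‖ξ‖ + ‖η‖) / 12 := by positivity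
  constructor
  · -- lower bound
    by_cases hcase : ‖η‖ ≤ 2 * ‖ξ‖
    · have := stmt_0_aux f hf_mono hf_nonneg ξ η hint 0 (1/3) ((‖ξ‖ + ‖η‖)/12)
        le_rfl (by norm_num) (by norm_num) hc ?_
      · simpa using this
      · intro t ht
        obtain ⟨ht0, ht1⟩ := ht
        have hkey : ‖ξ‖ ≤ ‖ξ + t • η‖ + t * ‖η‖ := by
          have : ‖ξ‖ = ‖(ξ + t • η) - t • η‖ := by rw [add_sub_cancel_right]
          rw [this]
          calc ‖(ξ + t • η) - t • η‖ ≤ ‖ξ + t • η‖ + ‖t • η‖ := norm_sub_le _ _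
            _ = ‖ξ + t • η‖ + t * ‖η‖ := by rw [norm_smul, Real.norm_of_nonneg ht0]
        nlinarith [norm_nonneg η, norm_nonneg ξ]
    · push_neg at hcase
      have := stmt_0_aux f hf_mono hf_nonneg ξ η hint (2/3) 1 ((‖ξ‖ + ‖η‖)/12)
        (by norm_num) (by norm_num) le_rfl hc ?_
      · have e : (1:ℝ) - 2/3 = 1/3 := by norm_num
        rw [e] at this; exact this
      · intro t ht
        obtain ⟨ht0, ht1⟩ := ht
        have ht0' : (0:ℝ) ≤ t := by linarith
        have hkey : t * ‖η‖ ≤ ‖ξ + t • η‖ + ‖ξ‖ := by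
          have : t * ‖η‖ = ‖(ξ + t • η) - ξ‖ := by
            rw [add_sub_cancel_left, norm_smul, Real.norm_of_nonneg ht0']
          rw [this]
          exact norm_sub_le _ _
        nlinarith [norm_nonneg η, norm_nonneg ξ]
  · -- upper bound
    have : (∫ t in (0:ℝ)..1, f ‖ξ + t • η‖) ≤ ∫ t in (0:ℝ)..1, f (‖ξ‖ + ‖η‖) := by
      apply integral_mono_on (by norm_num) hint intervalIntegrable_const
      intro t ht
      obtain ⟨ht0, ht1⟩ := ht
      apply hf_mono (norm_nonneg _) (Set.mem_Ici.mpr (by positivity))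
      calc ‖ξ + t • η‖ ≤ ‖ξ‖ + ‖t • η‖ := norm_add_le _ _
        _ = ‖ξ‖ + t * ‖η‖ := by rw [norm_smul, Real.norm_of_nonneg ht0]
        _ ≤ ‖ξ‖ + ‖η‖ := by nlinarith [norm_nonneg η]
    simpa using this
end

section
/- Let g' : (0,∞) → (0,∞) be increasing (hence g convex) with second derivative g'' satisfying (p-2)g'(t) ≤ t·g''(t) ≤ (q-2)g'(t) for all t > 0, where 2 < p ≤ q. Then there exists a constant c > 0 depending only on p and q such that for all a, b > 0 with a ≠ b: |g'(a) − g'(b)| ≤ c · g''(a+b) · |a − b|. -/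
/-!
The lower bound `(p - 2) g' ≤ t g''` makes `g''` positive and, together with the upper bound and
the monotonicity of `g'`, makes `t g''(t)` increasing up to the factor `(q - 2)/(p - 2)`.
For `0 < a < b`: if `b ≤ 2a`, the mean value theorem gives `g'(b) - g'(a) = g''(ξ)(b - a)` with
`ξ > a ≥ (a + b)/3`, so `g''(ξ)` is controlled by `g''(a + b)`; if `b > 2a`, then
`a + b < 3(b - a)` and simply `g'(b) - g'(a) ≤ g'(a + b) ≤ (a + b) g''(a + b)/(p - 2)`.
-/

variable {g' g'' : ℝ → ℝ} {p q : ℝ}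

lemma deriv_pos_of_lower_bound (hp : 2 < p) (hg'_pos : ∀ t > 0, 0 < g' t)
    (hlow : ∀ t > 0, (p - 2) * g' t ≤ t * g'' t) {t : ℝ} (ht : 0 < t) : 0 < g'' t :=
  pos_of_mul_pos_right ((mul_pos (sub_pos.2 hp) (hg'_pos t ht)).trans_le (hlow t ht)) ht.le

lemma mul_deriv_le_of_lt (hp : 2 < p) (hpq : p ≤ q) (hg'_mono : StrictMonoOn g' (Set.Ioi 0))
    (hlow : ∀ t > 0, (p - 2) * g' t ≤ t * g'' t) (hup : ∀ t > 0, t * g'' t ≤ (q - 2) * g' t)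
    {s t : ℝ} (hs : 0 < s) (hst : s < t) :
    s * g'' s ≤ (q - 2) / (p - 2) * (t * g'' t) := by
  have ht : 0 < t := hs.trans hst
  have hp2 : 0 < p - 2 := sub_pos.2 hp
  calc s * g'' s ≤ (q - 2) * g' s := hup s hs
    _ ≤ (q - 2) * g' t := mul_le_mul_of_nonneg_left (hg'_mono hs ht hst).le (by linarith)
    _ = (q - 2) / (p - 2) * ((p - 2) * g' t) := by field_simp
    _ ≤ (q - 2) / (p - 2) * (t * g'' t) :=
      mul_le_mul_of_nonneg_left (hlow t ht) (div_nonneg (by linarith) hp2.le)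

lemma sub_le_of_le_two_mul (hp : 2 < p) (hpq : p ≤ q) (hg'_pos : ∀ t > 0, 0 < g' t)
    (hg'_mono : StrictMonoOn g' (Set.Ioi 0)) (hderiv : ∀ t > 0, HasDerivAt g' (g'' t) t)
    (hlow : ∀ t > 0, (p - 2) * g' t ≤ t * g'' t) (hup : ∀ t > 0, t * g'' t ≤ (q - 2) * g' t)
    {a b : ℝ} (ha : 0 < a) (hab : a < b) (hb : b ≤ 2 * a) :
    g' b - g' a ≤ 3 * (q - 2) / (p - 2) * g'' (a + b) * (b - a) := by
  have hcont : ContinuousOn g' (Set.Icc a b) := fun x hx =>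
    (hderiv x (ha.trans_le hx.1)).continuousAt.continuousWithinAt
  obtain ⟨ξ, ⟨haξ, hξb⟩, hξ⟩ :=
    exists_hasDerivAt_eq_slope g' g'' hab hcont fun x hx => hderiv x (ha.trans hx.1)
  have hξ0 : 0 < ξ := ha.trans haξ
  have hmvt : g' b - g' a = g'' ξ * (b - a) := by
    rw [hξ, div_mul_cancel₀ _ (sub_ne_zero.2 hab.ne')]
  have hbound : ξ * g'' ξ ≤ ξ * (3 * (q - 2) / (p - 2) * g'' (a + b)) := calc
    ξ * g'' ξ ≤ (q - 2) / (p - 2) * ((a + b) * g'' (a + b)) :=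
      mul_deriv_le_of_lt hp hpq hg'_mono hlow hup hξ0 (by linarith)
    _ ≤ (q - 2) / (p - 2) * ((3 * ξ) * g'' (a + b)) := by
      have := deriv_pos_of_lower_bound hp hg'_pos hlow (show 0 < a + b by linarith)
      gcongr
      · exact div_nonneg (by linarith) (by linarith)
      · linarith
    _ = ξ * (3 * (q - 2) / (p - 2) * g'' (a + b)) := by ring
  rw [hmvt]
  exact mul_le_mul_of_nonneg_right (le_of_mul_le_mul_left hbound hξ0) (sub_nonneg.2 hab.le)

lemma sub_le_of_two_mul_le (hp : 2 < p) (hg'_pos : ∀ t > 0, 0 < g' t)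
    (hg'_mono : StrictMonoOn g' (Set.Ioi 0)) (hlow : ∀ t > 0, (p - 2) * g' t ≤ t * g'' t)
    {a b : ℝ} (ha : 0 < a) (hb : 2 * a ≤ b) :
    g' b - g' a ≤ 3 / (p - 2) * g'' (a + b) * (b - a) := by
  have hp2 : 0 < p - 2 := sub_pos.2 hp
  have hsum : 0 < a + b := by linarith
  have := deriv_pos_of_lower_bound hp hg'_pos hlow hsum
  calc g' b - g' a ≤ g' (a + b) := by
        linarith [hg'_pos a ha, hg'_mono (show 0 < b by linarith) hsum (by linarith)]
    _ ≤ (a + b) * g'' (a + b) / (p - 2) := by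
        rw [le_div_iff₀ hp2, mul_comm]
        exact hlow _ hsum
    _ ≤ 3 * (b - a) * g'' (a + b) / (p - 2) := by gcongr; linarith
    _ = 3 / (p - 2) * g'' (a + b) * (b - a) := by ring

lemma sub_le_mul_deriv_add_mul_sub (hp : 2 < p) (hpq : p ≤ q) (hg'_pos : ∀ t > 0, 0 < g' t)
    (hg'_mono : StrictMonoOn g' (Set.Ioi 0)) (hderiv : ∀ t > 0, HasDerivAt g' (g'' t) t)
    (hlow : ∀ t > 0, (p - 2) * g' t ≤ t * g'' t) (hup : ∀ t > 0, t * g'' t ≤ (q - 2) * g' t)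
    {a b : ℝ} (ha : 0 < a) (hab : a < b) :
    g' b - g' a ≤ 3 * (q - 1) / (p - 2) * g'' (a + b) * (b - a) := by
  have hp2 : 0 < p - 2 := sub_pos.2 hp
  have := deriv_pos_of_lower_bound hp hg'_pos hlow (show 0 < a + b by linarith)
  rcases le_or_gt b (2 * a) with hb | hb
  · calc g' b - g' a ≤ 3 * (q - 2) / (p - 2) * g'' (a + b) * (b - a) :=
          sub_le_of_le_two_mul hp hpq hg'_pos hg'_mono hderiv hlow hup ha hab hb
      _ ≤ 3 * (q - 1) / (p - 2) * g'' (a + b) * (b - a) := by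
          gcongr
          linarith
  · calc g' b - g' a ≤ 3 / (p - 2) * g'' (a + b) * (b - a) :=
          sub_le_of_two_mul_le hp hg'_pos hg'_mono hlow ha hb.le
      _ ≤ 3 * (q - 1) / (p - 2) * g'' (a + b) * (b - a) := by
          gcongr
          linarith

/-- Part of Lemma A.3: if `g'` is positive and increasing on `(0,∞)` with
`(p-2) g'(t) ≤ t g''(t) ≤ (q-2) g'(t)`, `2 < p ≤ q`, then
`|g'(a) - g'(b)| ≤ c g''(a+b) |a-b|` for `a, b > 0`, `a ≠ b`. -/
theorem stmt_3 (g' g'' : ℝ → ℝ) (p q : ℝ) (hp : 2 < p) (hpq : p ≤ q)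
    (hg'_pos : ∀ t > 0, 0 < g' t)
    (hg'_mono : StrictMonoOn g' (Set.Ioi 0))
    (hderiv : ∀ t > 0, HasDerivAt g' (g'' t) t)
    (hlow : ∀ t > 0, (p - 2) * g' t ≤ t * g'' t)
    (hup : ∀ t > 0, t * g'' t ≤ (q - 2) * g' t) :
    ∃ c > (0:ℝ), ∀ a > (0:ℝ), ∀ b > (0:ℝ), a ≠ b →
      |g' a - g' b| ≤ c * g'' (a + b) * |a - b| := by
  refine ⟨3 * (q - 1) / (p - 2), div_pos (by linarith) (by linarith), ?_⟩
  intro a ha b hb hne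
  wlog hab : a < b generalizing a b
  · have := this b hb a ha hne.symm (lt_of_le_of_ne (not_lt.1 hab) hne.symm)
    rwa [abs_sub_comm, abs_sub_comm b, add_comm] at this
  rw [abs_sub_comm, abs_of_nonneg (sub_nonneg.2 (hg'_mono ha hb hab).le), abs_sub_comm,
    abs_of_pos (sub_pos.2 hab)]
  exact sub_le_mul_deriv_add_mul_sub hp hpq hg'_pos hg'_mono hderiv hlow hup ha hab
end

section
/- Let g be increasing with g(κt) ≤ κ^{q-1}g(t) for κ ≥ 1 (doubling of order q−1), G(t)=∫₀ᵗ g, satisfying p G(t) ≤ t g(t) ≤ q G(t), p > 2. Choose ε₂ ∈ (0, q) and t ∈ (1, q') with ε₂ ≤ q − (q−1)t. Then there exists C = C(q, t, G(1)) such that for all a ≥ 1: g(a)^t ≤ C · G(a)^{1 − ε₂/q}. -/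
/-!
Doubling of order `q - 1` gives `g a ≤ a^(q-1) g(1)`, i.e. `g(a)^(1/(q-1)) ≤ g(1)^(1/(q-1)) a`, so
`g(a)^q' ≤ g(1)^(1/(q-1)) · a g(a) ≤ q g(1)^(1/(q-1)) G(a)`. Raising this to the power
`s = t/q' ≤ 1 - ε₂/q` bounds `g(a)^t` by a multiple of `G(a)^s`, and since `G(a) ≥ g(1)/q` is
bounded away from zero, `G(a)^s` is at most a multiple of `G(a)^(1 - ε₂/q)`.
-/

open Real

theorem rpow_div_sub_one_le_of_le_rpow_mul {x y a q : ℝ} (hq : 1 < q) (hx : 0 ≤ x) (hy : 0 ≤ y)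
    (ha : 0 ≤ a) (h : x ≤ a ^ (q - 1) * y) :
    x ^ (q / (q - 1)) ≤ y ^ (1 / (q - 1)) * (a * x) := by
  have hq1 : 0 < q - 1 := sub_pos.2 hq
  have hroot : x ^ (1 / (q - 1)) ≤ a * y ^ (1 / (q - 1)) :=
    calc x ^ (1 / (q - 1)) ≤ (a ^ (q - 1) * y) ^ (1 / (q - 1)) :=
          rpow_le_rpow hx h (by positivity)
      _ = a * y ^ (1 / (q - 1)) := by
          rw [mul_rpow (by positivity) hy, ← rpow_mul ha, mul_one_div_cancel hq1.ne', rpow_one]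
  calc x ^ (q / (q - 1)) = x * x ^ (1 / (q - 1)) := by
        rw [← rpow_one_add' hx (by positivity)]
        congr 1
        field_simp
        ring
    _ ≤ x * (a * y ^ (1 / (q - 1))) := mul_le_mul_of_nonneg_left hroot hx
    _ = y ^ (1 / (q - 1)) * (a * x) := by ring

theorem rpow_le_rpow_sub_mul_rpow_of_le {x m s r : ℝ} (hm : 0 < m) (hmx : m ≤ x) (hsr : s ≤ r) :
    x ^ s ≤ m ^ (s - r) * x ^ r := by
  have hx : 0 < x := hm.trans_le hmx
  calc x ^ s = x ^ (s - r) * x ^ r := by rw [← rpow_add hx, sub_add_cancel]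
    _ ≤ m ^ (s - r) * x ^ r :=
        mul_le_mul_of_nonneg_right (rpow_le_rpow_of_nonpos hm hmx (by linarith)) (by positivity)

section Doubling

variable {g G : ℝ → ℝ} {q a : ℝ}

theorem le_rpow_mul_of_doubling
    (hdoubling : ∀ κ ≥ (1:ℝ), ∀ s ≥ (0:ℝ), g (κ * s) ≤ κ ^ (q - 1) * g s) (ha : 1 ≤ a) :
    g a ≤ a ^ (q - 1) * g 1 := by
  simpa using hdoubling a ha 1 zero_le_one

theorem eq_zero_of_doubling_of_apply_one_eq_zero (hg_nonneg : ∀ s ≥ (0:ℝ), 0 ≤ g s)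
    (hdoubling : ∀ κ ≥ (1:ℝ), ∀ s ≥ (0:ℝ), g (κ * s) ≤ κ ^ (q - 1) * g s) (hg1 : g 1 = 0)
    (ha : 1 ≤ a) : g a = 0 := by
  have := le_rpow_mul_of_doubling hdoubling ha
  rw [hg1, mul_zero] at this
  exact this.antisymm (hg_nonneg a (by linarith))

theorem rpow_div_sub_one_le_of_doubling (hq : 1 < q) (hg_nonneg : ∀ s ≥ (0:ℝ), 0 ≤ g s)
    (hdoubling : ∀ κ ≥ (1:ℝ), ∀ s ≥ (0:ℝ), g (κ * s) ≤ κ ^ (q - 1) * g s)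
    (hGg : ∀ s > (0:ℝ), s * g s ≤ q * G s) (ha : 1 ≤ a) :
    g a ^ (q / (q - 1)) ≤ q * g 1 ^ (1 / (q - 1)) * G a := by
  have hg1 : 0 ≤ g 1 := hg_nonneg 1 zero_le_one
  calc g a ^ (q / (q - 1)) ≤ g 1 ^ (1 / (q - 1)) * (a * g a) :=
        rpow_div_sub_one_le_of_le_rpow_mul hq (hg_nonneg a (by linarith)) hg1 (by linarith)
          (le_rpow_mul_of_doubling hdoubling ha)
    _ ≤ g 1 ^ (1 / (q - 1)) * (q * G a) :=
        mul_le_mul_of_nonneg_left (hGg a (by linarith)) (by positivity)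
    _ = q * g 1 ^ (1 / (q - 1)) * G a := by ring

theorem apply_one_div_le_of_monotoneOn (hq : 0 < q) (hg_mono : MonotoneOn g (Set.Ici 0))
    (hg_nonneg : ∀ s ≥ (0:ℝ), 0 ≤ g s) (hGg : ∀ s > (0:ℝ), s * g s ≤ q * G s) (ha : 1 ≤ a) :
    g 1 / q ≤ G a := by
  have ha0 : (0:ℝ) ≤ a := by linarith
  rw [div_le_iff₀' hq]
  calc g 1 ≤ g a := hg_mono (Set.mem_Ici.2 zero_le_one) ha0 ha
    _ ≤ a * g a := le_mul_of_one_le_left (hg_nonneg a ha0) ha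
    _ ≤ q * G a := hGg a (by linarith)

theorem rpow_mul_le_mul_rpow_of_doubling (hq : 1 < q) (hg_mono : MonotoneOn g (Set.Ici 0))
    (hg_nonneg : ∀ s ≥ (0:ℝ), 0 ≤ g s)
    (hdoubling : ∀ κ ≥ (1:ℝ), ∀ s ≥ (0:ℝ), g (κ * s) ≤ κ ^ (q - 1) * g s)
    (hGg : ∀ s > (0:ℝ), s * g s ≤ q * G s) (hg1 : 0 < g 1) {s r : ℝ} (hs : 0 ≤ s) (hsr : s ≤ r)
    (ha : 1 ≤ a) :
    g a ^ (q / (q - 1) * s) ≤ (q * g 1 ^ (1 / (q - 1))) ^ s * (g 1 / q) ^ (s - r) * G a ^ r := by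
  have hq0 : 0 < q := by linarith
  have hGa := apply_one_div_le_of_monotoneOn hq0 hg_mono hg_nonneg hGg ha
  have hGa0 : 0 < G a := (div_pos hg1 hq0).trans_le hGa
  calc g a ^ (q / (q - 1) * s) = (g a ^ (q / (q - 1))) ^ s :=
        rpow_mul (hg_nonneg a (by linarith)) _ _
    _ ≤ (q * g 1 ^ (1 / (q - 1)) * G a) ^ s :=
        rpow_le_rpow (rpow_nonneg (hg_nonneg a (by linarith)) _)
          (rpow_div_sub_one_le_of_doubling hq hg_nonneg hdoubling hGg ha) hs
    _ = (q * g 1 ^ (1 / (q - 1))) ^ s * G a ^ s := mul_rpow (by positivity) hGa0.le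
    _ ≤ (q * g 1 ^ (1 / (q - 1))) ^ s * ((g 1 / q) ^ (s - r) * G a ^ r) :=
        mul_le_mul_of_nonneg_left
          (rpow_le_rpow_sub_mul_rpow_of_le (by positivity) hGa hsr) (by positivity)
    _ = (q * g 1 ^ (1 / (q - 1))) ^ s * (g 1 / q) ^ (s - r) * G a ^ r := by ring

theorem exists_rpow_mul_le_mul_rpow_of_doubling (hq : 1 < q)
    (hg_mono : MonotoneOn g (Set.Ici 0)) (hg_nonneg : ∀ s ≥ (0:ℝ), 0 ≤ g s)
    (hdoubling : ∀ κ ≥ (1:ℝ), ∀ s ≥ (0:ℝ), g (κ * s) ≤ κ ^ (q - 1) * g s)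
    (hGg : ∀ s > (0:ℝ), s * g s ≤ q * G s) (hG_nonneg : ∀ s ≥ (0:ℝ), 0 ≤ G s) {s r : ℝ}
    (hs : 0 < s) (hsr : s ≤ r) :
    ∃ C > (0:ℝ), ∀ a ≥ (1:ℝ), g a ^ (q / (q - 1) * s) ≤ C * G a ^ r := by
  rcases (hg_nonneg 1 zero_le_one).eq_or_lt with hg1 | hg1
  · refine ⟨1, one_pos, fun a ha ↦ ?_⟩
    have hq1 : 0 < q - 1 := by linarith
    rw [eq_zero_of_doubling_of_apply_one_eq_zero hg_nonneg hdoubling hg1.symm ha,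
      zero_rpow (by positivity), one_mul]
    exact rpow_nonneg (hG_nonneg a (by linarith)) _
  exact ⟨_, by positivity, fun a ha ↦
    rpow_mul_le_mul_rpow_of_doubling hq hg_mono hg_nonneg hdoubling hGg hg1 hs.le hsr ha⟩

end Doubling

theorem stmt_11_general (g G : ℝ → ℝ) (p q : ℝ) (hp : 2 < p) (hpq : p ≤ q)
    (hg_mono : MonotoneOn g (Set.Ici 0))
    (hg_nonneg : ∀ s ≥ (0:ℝ), 0 ≤ g s)
    (hdoubling : ∀ κ ≥ (1:ℝ), ∀ s ≥ (0:ℝ), g (κ * s) ≤ κ ^ (q - 1) * g s)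
    (hGg : ∀ s > (0:ℝ), p * G s ≤ s * g s ∧ s * g s ≤ q * G s)
    (hG_nonneg : ∀ s ≥ (0:ℝ), 0 ≤ G s)
    (t ε₂ : ℝ) (ht : t ∈ Set.Ioo 1 (q / (q - 1)))
    (hε₂' : ε₂ ≤ q - (q - 1) * t) :
    ∃ C > (0:ℝ), ∀ a ≥ (1:ℝ), (g a) ^ t ≤ C * (G a) ^ (1 - ε₂ / q) := by
  have hq : 1 < q := by linarith
  have hq0 : 0 < q := by linarith
  have hq1 : q - 1 ≠ 0 := by linarith
  have ht0 : 0 < t := by linarith [ht.1]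
  have hs : t * (q - 1) / q ≤ 1 - ε₂ / q := by
    rw [show 1 - ε₂ / q = (q - ε₂) / q by field_simp]
    exact div_le_div_of_nonneg_right (by linarith) hq0.le
  obtain ⟨C, hC, hbound⟩ := exists_rpow_mul_le_mul_rpow_of_doubling hq hg_mono hg_nonneg hdoubling
    (fun s hs ↦ (hGg s hs).2) hG_nonneg (div_pos (mul_pos ht0 (by linarith)) hq0) hs
  refine ⟨C, hC, fun a ha ↦ ?_⟩
  simpa [show q / (q - 1) * (t * (q - 1) / q) = t by field_simp] using hbound a ha

/-- Estimate used in Lemma 3.9: for `a ≥ 1`, `g(a)^t ≤ C G(a)^{1-ε₂/q}` whenever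
`t ∈ (1, q')` and `0 < ε₂ ≤ q - (q-1)t`. -/
theorem stmt_11 (g G : ℝ → ℝ) (p q : ℝ) (hp : 2 < p) (hpq : p ≤ q)
    (hg_mono : MonotoneOn g (Set.Ici 0))
    (hg_nonneg : ∀ s ≥ (0:ℝ), 0 ≤ g s)
    (hdoubling : ∀ κ ≥ (1:ℝ), ∀ s ≥ (0:ℝ), g (κ * s) ≤ κ ^ (q - 1) * g s)
    (hGg : ∀ s > (0:ℝ), p * G s ≤ s * g s ∧ s * g s ≤ q * G s)
    (hG_nonneg : ∀ s ≥ (0:ℝ), 0 ≤ G s)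
    (t ε₂ : ℝ) (ht : t ∈ Set.Ioo 1 (q / (q - 1)))
    (hε₂ : 0 < ε₂) (hε₂' : ε₂ ≤ q - (q - 1) * t) :
    ∃ C > (0:ℝ), ∀ a ≥ (1:ℝ), (g a) ^ t ≤ C * (G a) ^ (1 - ε₂ / q) :=
  stmt_11_general g G p q hp hpq hg_mono hg_nonneg hdoubling hGg hG_nonneg t ε₂ ht hε₂'
end

section
/- Let A : ℝ^{n×m} → ℝ^{n×m} be defined by A(ξ) = (g(|ξ|)/|ξ|)·ξ for ξ ≠ 0 and A(0)=0, where g is C¹ on (0,∞), increasing, g(0⁺)=0, and satisfies (p−1)g(t) ≤ t g'(t) ≤ (q−1)g(t) with 1 < p ≤ q. Then A is strictly monotone: ⟨A(ξ) − A(η), ξ − η⟩_F > 0 for all ξ ≠ η in ℝ^{n×m}. -/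
/-!
With `α = g ‖ξ‖ / ‖ξ‖` and `β = g ‖η‖ / ‖η‖`, expanding the inner product and applying
Cauchy–Schwarz gives `⟪α • ξ - β • η, ξ - η⟫ ≥ (g ‖ξ‖ - g ‖η‖) (‖ξ‖ - ‖η‖)`, which is positive
when the norms differ since `g` is strictly increasing. When the norms agree, `α = β` and the
inner product is `α ‖ξ - η‖² > 0`.
-/

open scoped RealInnerProductSpace

section RadialField

variable {E : Type*} [NormedAddCommGroup E] [InnerProductSpace ℝ E]

theorem mul_norm_sub_mul_norm_le_inner_smul_sub_smul {α β : ℝ} (hα : 0 ≤ α) (hβ : 0 ≤ β)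
    (x y : E) :
    (α * ‖x‖ - β * ‖y‖) * (‖x‖ - ‖y‖) ≤ ⟪α • x - β • y, x - y⟫ := by
  have hexpand : ⟪α • x - β • y, x - y⟫ = α * ‖x‖ ^ 2 + β * ‖y‖ ^ 2 - (α + β) * ⟪x, y⟫ := by
    simp only [inner_sub_left, inner_sub_right, real_inner_smul_left,
      real_inner_self_eq_norm_sq, real_inner_comm x y]
    ring
  have hcs : (α + β) * ⟪x, y⟫ ≤ (α + β) * (‖x‖ * ‖y‖) :=
    mul_le_mul_of_nonneg_left (real_inner_le_norm x y) (add_nonneg hα hβ)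
  rw [hexpand]
  nlinarith

theorem StrictMonoOn.mul_sub_pos {g : ℝ → ℝ} {s : Set ℝ} (hg : StrictMonoOn g s) {a b : ℝ}
    (ha : a ∈ s) (hb : b ∈ s) (hab : a ≠ b) : 0 < (g a - g b) * (a - b) := by
  rcases hab.lt_or_gt with h | h
  · exact mul_pos_of_neg_of_neg (sub_neg.2 (hg ha hb h)) (sub_neg.2 h)
  · exact mul_pos (sub_pos.2 (hg hb ha h)) (sub_pos.2 h)

/-- Since `0 / 0 = 0` the field vanishes at `x = 0`, and `g 0 = 0` makes `g t / t * t = g t`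
hold at `t = 0` too, so the zero vector needs no separate case. -/
theorem inner_radial_sub_radial_pos {g : ℝ → ℝ} (hg0 : g 0 = 0)
    (hg : StrictMonoOn g (Set.Ici 0)) {x y : E} (hxy : x ≠ y) :
    0 < ⟪(g ‖x‖ / ‖x‖) • x - (g ‖y‖ / ‖y‖) • y, x - y⟫ := by
  have hg_pos : ∀ t, 0 < t → 0 < g t := fun t ht => by
    simpa [hg0] using hg Set.self_mem_Ici ht.le ht
  have hcoef_nonneg : ∀ t, 0 ≤ t → 0 ≤ g t / t := fun t ht =>
    div_nonneg (by simpa [hg0] using hg.monotoneOn Set.self_mem_Ici ht ht) ht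
  have hcoef_mul : ∀ t, g t / t * t = g t := fun t =>
    div_mul_cancel_of_imp fun ht => by rw [ht, hg0]
  by_cases hnorm : ‖x‖ = ‖y‖
  · have hx : 0 < ‖x‖ := by
      refine (norm_nonneg x).lt_of_ne fun h => hxy ?_
      rw [norm_eq_zero.1 h.symm, norm_eq_zero.1 (hnorm.symm.trans h.symm)]
    rw [← hnorm, ← smul_sub, real_inner_smul_left, real_inner_self_eq_norm_sq]
    have hsub : 0 < ‖x - y‖ := norm_pos_iff.2 (sub_ne_zero.2 hxy)
    exact mul_pos (div_pos (hg_pos _ hx) hx) (by positivity)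
  · calc 0 < (g ‖x‖ - g ‖y‖) * (‖x‖ - ‖y‖) :=
          hg.mul_sub_pos (norm_nonneg x) (norm_nonneg y) hnorm
      _ = (g ‖x‖ / ‖x‖ * ‖x‖ - g ‖y‖ / ‖y‖ * ‖y‖) * (‖x‖ - ‖y‖) := by
          rw [hcoef_mul, hcoef_mul]
      _ ≤ _ := mul_norm_sub_mul_norm_le_inner_smul_sub_smul
          (hcoef_nonneg _ (norm_nonneg x)) (hcoef_nonneg _ (norm_nonneg y)) x y

end RadialField

theorem stmt_18_general {n m : ℕ} (g : ℝ → ℝ)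
    (hg0 : g 0 = 0) (hg_mono : StrictMonoOn g (Set.Ici 0))
    (A : EuclideanSpace ℝ (Fin n × Fin m) → EuclideanSpace ℝ (Fin n × Fin m))
    (hA0 : A 0 = 0)
    (hA : ∀ ξ, ξ ≠ 0 → A ξ = (g ‖ξ‖ / ‖ξ‖) • ξ) :
    ∀ ξ η : EuclideanSpace ℝ (Fin n × Fin m), ξ ≠ η →
      0 < ⟪A ξ - A η, ξ - η⟫ := by
  have hA_radial : ∀ ξ, A ξ = (g ‖ξ‖ / ‖ξ‖) • ξ := fun ξ => by
    rcases eq_or_ne ξ 0 with rfl | hξ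
    · rw [hA0, smul_zero]
    · exact hA ξ hξ
  intro ξ η hne
  rw [hA_radial, hA_radial]
  exact inner_radial_sub_radial_pos hg0 hg_mono hne

/-- Strict monotonicity of the vector field `A(ξ) = (g(|ξ|)/|ξ|) ξ`:
`⟨A(ξ) - A(η), ξ - η⟩ > 0` for `ξ ≠ η`. -/
theorem stmt_18 {n m : ℕ} (g g' : ℝ → ℝ) (p q : ℝ) (hp : 1 < p) (hpq : p ≤ q)
    (hg0 : g 0 = 0) (hg_mono : StrictMonoOn g (Set.Ici 0))
    (hg_pos : ∀ t > 0, 0 < g t)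
    (hderiv : ∀ t > 0, HasDerivAt g (g' t) t)
    (hlow : ∀ t > 0, (p - 1) * g t ≤ t * g' t)
    (hup : ∀ t > 0, t * g' t ≤ (q - 1) * g t)
    (A : EuclideanSpace ℝ (Fin n × Fin m) → EuclideanSpace ℝ (Fin n × Fin m))
    (hA0 : A 0 = 0)
    (hA : ∀ ξ, ξ ≠ 0 → A ξ = (g ‖ξ‖ / ‖ξ‖) • ξ) :
    ∀ ξ η : EuclideanSpace ℝ (Fin n × Fin m), ξ ≠ η →
      0 < ⟪A ξ - A η, ξ - η⟫ :=
  stmt_18_general g hg0 hg_mono A hA0 hA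
end
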